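/- Let X be a normed space, C ⊆ X a nonempty bounded convex subset with diameter d_C = sup{‖x − y‖ : x, y ∈ C} > 0, T : C → C nonexpansive, Φ : C → C a ρ-contraction, and {α_n}_{n≥0} a sequence in (0,1) such that lim α_n = 0 with rate of convergence φ, ∑ α_n diverges with rate of divergence θ, and ∑ |α_{n+1} − α_n| converges with Cauchy modulus β. Then for every x_0 ∈ C the iteration x_{n+1} = T(α_n Φ(x_n) + (1 − α_n)x_n) satisfies lim ‖x_n − Tx_n‖ = 0 and, for all ε ∈ (0,2), ‖x_n − Tx_n‖ < ε for all n ≥ Ψ, where Ψ = max{ 1 + θ(⌈1/(1 − ρ)⌉ · (β(ε/(4P)) + 2 + ⌈ln(4d_C/ε)⌉)), 1 + φ(ε/(2P)) } and P = (2 + ρ)d_C. -/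

import Mathlib

/-!
Put `y n = α n • Φ (x n) + (1 - α n) • x n`, so that `x (n + 1) = T (y n)`. Nonexpansivity of `T`
and contractivity of `Φ` give the recursive inequality
`‖x (n+2) - x (n+1)‖ ≤ (1 - (1 - ρ) α (n+1)) ‖x (n+1) - x n‖ + |α (n+1) - α n| d_C`.
Unrolled from `m = β (ε / 4P) + 1`, it bounds `‖x (n+1) - x n‖` by
`d_C exp (-(1 - ρ) ∑_{m < k ≤ n} α k)`, which the rate of divergence `θ` makes at most `ε / 4`,
plus `d_C ∑_{m ≤ k < n} |α (k+1) - α k|`, which the Cauchy modulus `β` makes at most `ε / 8`.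
Finally `‖x n - T (x n)‖ ≤ ‖x (n+1) - x n‖ + α n d_C`, and `φ` makes the last term at most `ε / 4`.
-/

open Filter Finset

theorem le_prod_mul_add_sum_of_le_mul_add {s c b : ℕ → ℝ} (hc₀ : ∀ n, 0 ≤ c n)
    (hc₁ : ∀ n, c n ≤ 1) (hb : ∀ n, 0 ≤ b n) (hs : ∀ n, s (n + 1) ≤ (1 - c n) * s n + b n)
    {m n : ℕ} (hmn : m ≤ n) :
    s n ≤ (∏ k ∈ Ico m n, (1 - c k)) * s m + ∑ k ∈ Ico m n, b k := by
  induction n, hmn using Nat.le_induction with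
  | base => simp
  | succ n hmn ih =>
    rw [prod_Ico_succ_top hmn, sum_Ico_succ_top hmn]
    have hS : 0 ≤ ∑ k ∈ Ico m n, b k := sum_nonneg fun k _ => hb k
    calc s (n + 1) ≤ (1 - c n) * s n + b n := hs n
      _ ≤ (1 - c n) * ((∏ k ∈ Ico m n, (1 - c k)) * s m + ∑ k ∈ Ico m n, b k) + b n := by
        gcongr
        linarith [hc₁ n]
      _ ≤ _ := by nlinarith [hc₀ n]

theorem prod_one_sub_le_exp_neg_sum {ι : Type*} (s : Finset ι) {c : ι → ℝ}
    (hc : ∀ i ∈ s, c i ≤ 1) : ∏ i ∈ s, (1 - c i) ≤ Real.exp (-∑ i ∈ s, c i) := by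
  rw [← sum_neg_distrib, Real.exp_sum]
  exact prod_le_prod (fun i hi => by linarith [hc i hi]) fun i _ => Real.one_sub_le_exp_neg _

theorem le_of_le_sum_range_succ {a : ℕ → ℝ} (ha : ∀ i, a i < 1) {N M : ℕ}
    (h : (N : ℝ) ≤ ∑ i ∈ range (M + 1), a i) : N ≤ M := by
  have hsum : ∑ i ∈ range (M + 1), a i < ∑ i ∈ range (M + 1), 1 :=
    sum_lt_sum_of_nonempty nonempty_range_add_one fun i _ => ha i
  have : (N : ℝ) < M + 1 := by simpa using h.trans_lt hsum
  exact Nat.lt_succ_iff.mp (by exact_mod_cast this)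

theorem sum_range_sub_le_sum_Ico {a : ℕ → ℝ} (ha : ∀ i, a i ≤ 1) {m n : ℕ} (hmn : m ≤ n) :
    ∑ i ∈ range n, a i - m ≤ ∑ i ∈ Ico m n, a i := by
  have : ∑ i ∈ range m, a i ≤ m := by simpa using sum_le_sum fun i (_ : i ∈ range m) => ha i
  rw [sum_Ico_eq_sub _ hmn]
  linarith

theorem one_le_one_sub_mul_ceil_inv {ρ : ℝ} (hρ : ρ < 1) :
    1 ≤ (1 - ρ) * ⌈1 / (1 - ρ)⌉₊ := by
  calc 1 = (1 - ρ) * (1 / (1 - ρ)) := (mul_one_div_cancel (by linarith)).symm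
    _ ≤ (1 - ρ) * ⌈1 / (1 - ρ)⌉₊ := mul_le_mul_of_nonneg_left (Nat.le_ceil _) (by linarith)

theorem cast_le_one_sub_mul_sum_Ico_of_rate_of_divergence {α : ℕ → ℝ}
    (hα : ∀ i, α i ∈ Set.Icc (0 : ℝ) 1) {θ : ℕ → ℕ}
    (hθ : ∀ n : ℕ, (n : ℝ) ≤ ∑ i ∈ range (θ n + 1), α i) {ρ : ℝ} (hρ₀ : 0 ≤ ρ) (hρ₁ : ρ < 1)
    {b L n : ℕ} (hbn : b + 1 ≤ n) (hn : θ (⌈1 / (1 - ρ)⌉₊ * (b + 2 + L)) < n) :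
    (L : ℝ) ≤ (1 - ρ) * ∑ k ∈ Ico (b + 1) n, α (k + 1) := by
  set K := ⌈1 / (1 - ρ)⌉₊
  have hsum : ((K * (b + 2 + L) : ℕ) : ℝ) - (b + 2) ≤ ∑ k ∈ Ico (b + 1) n, α (k + 1) := by
    rw [sum_Ico_add' α (b + 1) n 1]
    have h₁ := sum_range_sub_le_sum_Ico (fun i => (hα i).2) (show b + 1 + 1 ≤ n + 1 by omega)
    have h₂ : ∑ i ∈ range (θ (K * (b + 2 + L)) + 1), α i ≤ ∑ i ∈ range (n + 1), α i :=
      sum_le_sum_of_subset_of_nonneg (range_subset_range.2 (by omega))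
        fun i _ _ => (hα i).1
    push_cast at h₁
    linarith [hθ (K * (b + 2 + L))]
  have hK : 1 ≤ (1 - ρ) * K := one_le_one_sub_mul_ceil_inv hρ₁
  push_cast at hsum
  nlinarith [mul_le_mul_of_nonneg_left hsum (sub_nonneg.2 hρ₁.le)]

theorem exp_neg_ceil_log_div_mul_le {a e : ℝ} (ha : 0 < a) (he : 0 < e) :
    Real.exp (-⌈Real.log (a / e)⌉₊) * a ≤ e := by
  have : a / e ≤ Real.exp ⌈Real.log (a / e)⌉₊ :=
    calc a / e = Real.exp (Real.log (a / e)) := (Real.exp_log (by positivity)).symm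
      _ ≤ _ := Real.exp_le_exp.mpr (Nat.le_ceil _)
  rw [Real.exp_neg, inv_mul_le_iff₀ (Real.exp_pos _)]
  rwa [div_le_iff₀ he] at this

theorem norm_sub_le_diam {X : Type*} [SeminormedAddCommGroup X] {C : Set X}
    (hC : Bornology.IsBounded C) {a b : X} (ha : a ∈ C) (hb : b ∈ C) : ‖a - b‖ ≤ Metric.diam C := by
  simpa [dist_eq_norm] using Metric.dist_le_diam_of_mem hC ha hb

section NormedSpace

variable {X : Type*} [NormedAddCommGroup X] [NormedSpace ℝ X]

theorem norm_convexComb_sub_convexComb_le {a b : ℝ} (ha₀ : 0 ≤ a) (ha₁ : a ≤ 1) (p q u v : X) :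
    ‖(a • p + (1 - a) • u) - (b • q + (1 - b) • v)‖ ≤
      a * ‖p - q‖ + (1 - a) * ‖u - v‖ + |a - b| * ‖q - v‖ := by
  have : (a • p + (1 - a) • u) - (b • q + (1 - b) • v) =
      a • (p - q) + (1 - a) • (u - v) + (a - b) • (q - v) := by module
  rw [this]
  refine norm_add₃_le.trans_eq ?_
  rw [norm_smul, norm_smul, norm_smul, Real.norm_of_nonneg ha₀,
    Real.norm_of_nonneg (sub_nonneg.2 ha₁), Real.norm_eq_abs]

variable {C : Set X} {T Φ : X → X} {ρ : ℝ} {α : ℕ → ℝ} {x : ℕ → X}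

theorem norm_iterate_succ_succ_sub_le (hconv : Convex ℝ C) (hbdd : Bornology.IsBounded C)
    (hΦ : ∀ x ∈ C, Φ x ∈ C) (hTne : ∀ x ∈ C, ∀ y ∈ C, ‖T x - T y‖ ≤ ‖x - y‖)
    (hΦc : ∀ x ∈ C, ∀ y ∈ C, ‖Φ x - Φ y‖ ≤ ρ * ‖x - y‖) (hα : ∀ n, α n ∈ Set.Icc (0 : ℝ) 1)
    (hxC : ∀ n, x n ∈ C) (hrec : ∀ n, x (n + 1) = T (α n • Φ (x n) + (1 - α n) • x n))
    (n : ℕ) :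
    ‖x (n + 2) - x (n + 1)‖ ≤
      (1 - (1 - ρ) * α (n + 1)) * ‖x (n + 1) - x n‖ + |α (n + 1) - α n| * Metric.diam C := by
  have hyC : ∀ n, α n • Φ (x n) + (1 - α n) • x n ∈ C := fun n =>
    hconv (hΦ _ (hxC n)) (hxC n) (hα n).1 (sub_nonneg.2 (hα n).2) (by ring)
  calc ‖x (n + 2) - x (n + 1)‖
      ≤ ‖(α (n + 1) • Φ (x (n + 1)) + (1 - α (n + 1)) • x (n + 1)) -
          (α n • Φ (x n) + (1 - α n) • x n)‖ := by
        simpa only [← hrec] using hTne _ (hyC (n + 1)) _ (hyC n)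
    _ ≤ α (n + 1) * ‖Φ (x (n + 1)) - Φ (x n)‖ + (1 - α (n + 1)) * ‖x (n + 1) - x n‖ +
          |α (n + 1) - α n| * ‖Φ (x n) - x n‖ :=
        norm_convexComb_sub_convexComb_le (hα _).1 (hα _).2 _ _ _ _
    _ ≤ α (n + 1) * (ρ * ‖x (n + 1) - x n‖) + (1 - α (n + 1)) * ‖x (n + 1) - x n‖ +
          |α (n + 1) - α n| * Metric.diam C := by
        have := (hα (n + 1)).1
        gcongr
        · exact hΦc _ (hxC _) _ (hxC _)
        · exact norm_sub_le_diam hbdd (hΦ _ (hxC n)) (hxC n)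
    _ = _ := by ring

theorem norm_iterate_sub_apply_le (hconv : Convex ℝ C) (hbdd : Bornology.IsBounded C)
    (hΦ : ∀ x ∈ C, Φ x ∈ C) (hTne : ∀ x ∈ C, ∀ y ∈ C, ‖T x - T y‖ ≤ ‖x - y‖)
    (hα : ∀ n, α n ∈ Set.Icc (0 : ℝ) 1) (hxC : ∀ n, x n ∈ C)
    (hrec : ∀ n, x (n + 1) = T (α n • Φ (x n) + (1 - α n) • x n)) (n : ℕ) :
    ‖x n - T (x n)‖ ≤ ‖x (n + 1) - x n‖ + α n * Metric.diam C := by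
  have hyC : α n • Φ (x n) + (1 - α n) • x n ∈ C :=
    hconv (hΦ _ (hxC n)) (hxC n) (hα n).1 (sub_nonneg.2 (hα n).2) (by ring)
  have hstep : ‖x (n + 1) - T (x n)‖ ≤ α n * Metric.diam C :=
    calc ‖x (n + 1) - T (x n)‖ ≤ ‖(α n • Φ (x n) + (1 - α n) • x n) - x n‖ := by
          rw [hrec n]
          exact hTne _ hyC _ (hxC n)
      _ = α n * ‖Φ (x n) - x n‖ := by
          rw [show (α n • Φ (x n) + (1 - α n) • x n) - x n = α n • (Φ (x n) - x n) by module,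
            norm_smul, Real.norm_of_nonneg (hα n).1]
      _ ≤ α n * Metric.diam C := by
          have := (hα n).1
          gcongr
          exact norm_sub_le_diam hbdd (hΦ _ (hxC n)) (hxC n)
  calc ‖x n - T (x n)‖ ≤ ‖x n - x (n + 1)‖ + ‖x (n + 1) - T (x n)‖ :=
        norm_sub_le_norm_sub_add_norm_sub _ _ _
    _ ≤ ‖x (n + 1) - x n‖ + α n * Metric.diam C := by
        rw [norm_sub_rev]
        gcongr

theorem norm_iterate_succ_sub_le_exp (hconv : Convex ℝ C) (hbdd : Bornology.IsBounded C)
    (hΦ : ∀ x ∈ C, Φ x ∈ C) (hTne : ∀ x ∈ C, ∀ y ∈ C, ‖T x - T y‖ ≤ ‖x - y‖)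
    (hρ₀ : 0 ≤ ρ) (hρ₁ : ρ ≤ 1) (hΦc : ∀ x ∈ C, ∀ y ∈ C, ‖Φ x - Φ y‖ ≤ ρ * ‖x - y‖)
    (hα : ∀ n, α n ∈ Set.Icc (0 : ℝ) 1) (hxC : ∀ n, x n ∈ C)
    (hrec : ∀ n, x (n + 1) = T (α n • Φ (x n) + (1 - α n) • x n)) {m n : ℕ} (hmn : m ≤ n) :
    ‖x (n + 1) - x n‖ ≤ Real.exp (-((1 - ρ) * ∑ k ∈ Ico m n, α (k + 1))) * Metric.diam C +
      (∑ k ∈ Ico m n, |α (k + 1) - α k|) * Metric.diam C := by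
  have hc₀ : ∀ k, 0 ≤ (1 - ρ) * α (k + 1) := fun k =>
    mul_nonneg (sub_nonneg.2 hρ₁) (hα _).1
  have hc₁ : ∀ k, (1 - ρ) * α (k + 1) ≤ 1 := fun k => by
    nlinarith [(hα (k + 1)).1, (hα (k + 1)).2]
  have hd : 0 ≤ Metric.diam C := Metric.diam_nonneg
  have hunrolled := le_prod_mul_add_sum_of_le_mul_add (s := fun k => ‖x (k + 1) - x k‖)
    (b := fun k => |α (k + 1) - α k| * Metric.diam C) hc₀ hc₁
    (fun k => mul_nonneg (abs_nonneg _) hd)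
    (norm_iterate_succ_succ_sub_le hconv hbdd hΦ hTne hΦc hα hxC hrec) hmn
  have hprod := prod_one_sub_le_exp_neg_sum (Ico m n) fun k _ => hc₁ k
  rw [← mul_sum] at hprod
  rw [← sum_mul] at hunrolled
  calc ‖x (n + 1) - x n‖
      ≤ (∏ k ∈ Ico m n, (1 - (1 - ρ) * α (k + 1))) * ‖x (m + 1) - x m‖ +
          (∑ k ∈ Ico m n, |α (k + 1) - α k|) * Metric.diam C := hunrolled
    _ ≤ _ := by
        gcongr
        exact norm_sub_le_diam hbdd (hxC _) (hxC _)

theorem norm_iterate_sub_apply_lt_of_rates (hconv : Convex ℝ C) (hbdd : Bornology.IsBounded C)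
    (hdC : 0 < Metric.diam C) (hΦ : ∀ x ∈ C, Φ x ∈ C)
    (hTne : ∀ x ∈ C, ∀ y ∈ C, ‖T x - T y‖ ≤ ‖x - y‖) (hρ₀ : 0 ≤ ρ) (hρ₁ : ρ < 1)
    (hΦc : ∀ x ∈ C, ∀ y ∈ C, ‖Φ x - Φ y‖ ≤ ρ * ‖x - y‖) (hα : ∀ n, α n ∈ Set.Ioo (0 : ℝ) 1)
    {φ : ℝ → ℕ} (hφ : ∀ e : ℝ, 0 < e → ∀ n ≥ φ e, |α n| < e)
    {θ : ℕ → ℕ} (hθ : ∀ n : ℕ, (n : ℝ) ≤ ∑ i ∈ range (θ n + 1), α i)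
    {β : ℝ → ℕ} (hβ : ∀ e : ℝ, 0 < e → ∀ n : ℕ,
      abs ((∑ i ∈ range (β e + n + 1), |α (i + 1) - α i|) -
          ∑ i ∈ range (β e + 1), |α (i + 1) - α i|) < e)
    (hxC : ∀ n, x n ∈ C) (hrec : ∀ n, x (n + 1) = T (α n • Φ (x n) + (1 - α n) • x n))
    {e : ℝ} (he : 0 < e) {n : ℕ}
    (hn : n ≥ max
      (1 + θ (⌈1 / (1 - ρ)⌉₊ *
        (β (e / (4 * ((2 + ρ) * Metric.diam C))) + 2 + ⌈Real.log (4 * Metric.diam C / e)⌉₊)))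
      (1 + φ (e / (2 * ((2 + ρ) * Metric.diam C))))) :
    ‖x n - T (x n)‖ < e := by
  have hα' : ∀ n, α n ∈ Set.Icc (0 : ℝ) 1 := fun n => Set.Ioo_subset_Icc_self (hα n)
  set d := Metric.diam C
  set P := (2 + ρ) * d
  set b := β (e / (4 * P))
  set L := ⌈Real.log (4 * d / e)⌉₊
  set K := ⌈1 / (1 - ρ)⌉₊
  set N := K * (b + 2 + L)
  have hP : 0 < P := by simp only [P]; positivity
  have hdP : 2 * d ≤ P := by simp only [P]; nlinarith
  obtain ⟨hnθ, hnφ⟩ := max_le_iff.mp hn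
  have hNθ : N ≤ θ N := le_of_le_sum_range_succ (fun i => (hα i).2) (hθ N)
  have hN : b + 2 + L ≤ N :=
    Nat.le_mul_of_pos_left _ (Nat.ceil_pos.2 (one_div_pos.2 (sub_pos.2 hρ₁)))
  have hmn : b + 1 ≤ n := by omega
  have htail : ∑ k ∈ Ico (b + 1) n, |α (k + 1) - α k| < e / (4 * P) := by
    have h := hβ (e / (4 * P)) (by positivity) (n - (b + 1))
    rwa [show b + (n - (b + 1)) + 1 = n by omega, ← sum_Ico_eq_sub _ hmn,
      abs_of_nonneg (sum_nonneg fun _ _ => abs_nonneg _)] at h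
  have hexp : (L : ℝ) ≤ (1 - ρ) * ∑ k ∈ Ico (b + 1) n, α (k + 1) :=
    cast_le_one_sub_mul_sum_Ico_of_rate_of_divergence hα' hθ hρ₀ hρ₁ hmn
      (by change θ N < n; omega)
  have hαn : α n < e / (2 * P) := by
    simpa [abs_of_pos (hα n).1] using hφ _ (by positivity) n (by omega)
  calc ‖x n - T (x n)‖ ≤ ‖x (n + 1) - x n‖ + α n * d :=
        norm_iterate_sub_apply_le hconv hbdd hΦ hTne hα' hxC hrec n
    _ ≤ Real.exp (-((1 - ρ) * ∑ k ∈ Ico (b + 1) n, α (k + 1))) * d +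
          (∑ k ∈ Ico (b + 1) n, |α (k + 1) - α k|) * d + α n * d := by
        gcongr
        exact norm_iterate_succ_sub_le_exp hconv hbdd hΦ hTne hρ₀ hρ₁.le hΦc hα' hxC hrec hmn
    _ ≤ Real.exp (-L) * d + e / (4 * P) * d + e / (2 * P) * d := by gcongr
    _ ≤ e / 4 + e / 8 + e / 4 := by
        gcongr ?_ + ?_ + ?_
        · have := exp_neg_ceil_log_div_mul_le (by positivity : 0 < 4 * d) he
          linarith
        · rw [div_mul_eq_mul_div, div_le_div_iff₀ (by positivity) (by norm_num)]
          nlinarith [mul_le_mul_of_nonneg_left hdP he.le]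
        · rw [div_mul_eq_mul_div, div_le_div_iff₀ (by positivity) (by norm_num)]
          nlinarith [mul_le_mul_of_nonneg_left hdP he.le]
    _ < e := by linarith

end NormedSpace

theorem stmt_13_general
    {X : Type*} [NormedAddCommGroup X] [NormedSpace ℝ X]
    (C : Set X) (hconv : Convex ℝ C)
    (hbdd : Bornology.IsBounded C) (hdC : 0 < Metric.diam C)
    (T Φ : X → X) (hΦ : ∀ x ∈ C, Φ x ∈ C)
    (hTne : ∀ x ∈ C, ∀ y ∈ C, ‖T x - T y‖ ≤ ‖x - y‖)
    (ρ : ℝ) (hρ : ρ ∈ Set.Ioo (0 : ℝ) 1)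
    (hΦc : ∀ x ∈ C, ∀ y ∈ C, ‖Φ x - Φ y‖ ≤ ρ * ‖x - y‖)
    (α : ℕ → ℝ) (hα : ∀ n, α n ∈ Set.Ioo (0 : ℝ) 1)
    (φ : ℝ → ℕ) (hφ : ∀ e : ℝ, 0 < e → ∀ n ≥ φ e, |α n| < e)
    (θ : ℕ → ℕ) (hθ : ∀ n : ℕ, (n : ℝ) ≤ ∑ i ∈ Finset.range (θ n + 1), α i)
    (β : ℝ → ℕ)
    (hβ : ∀ e : ℝ, 0 < e → ∀ n : ℕ,
      abs ((∑ i ∈ Finset.range (β e + n + 1), |α (i + 1) - α i|) -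
          ∑ i ∈ Finset.range (β e + 1), |α (i + 1) - α i|) < e)
    (x : ℕ → X) (hxC : ∀ n, x n ∈ C)
    (hrec : ∀ n, x (n + 1) = T (α n • Φ (x n) + (1 - α n) • x n)) :
    Tendsto (fun n => ‖x n - T (x n)‖) atTop (nhds 0) ∧
      ∀ e ∈ Set.Ioo (0 : ℝ) 2,
        ∀ n ≥ max
          (1 + θ (⌈1 / (1 - ρ)⌉₊ *
            (β (e / (4 * ((2 + ρ) * Metric.diam C))) + 2 +
              ⌈Real.log (4 * Metric.diam C / e)⌉₊)))
          (1 + φ (e / (2 * ((2 + ρ) * Metric.diam C)))),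
        ‖x n - T (x n)‖ < e := by
  have rate := fun e (he : 0 < e) n => norm_iterate_sub_apply_lt_of_rates hconv hbdd hdC hΦ hTne
    hρ.1.le hρ.2 hΦc hα hφ hθ hβ hxC hrec he (n := n)
  refine ⟨Metric.tendsto_atTop.2 fun e he => ?_, fun e he => rate e he.1⟩
  exact ⟨_, fun n hn => by simpa using rate e he n hn⟩

theorem stmt_13
    {X : Type*} [NormedAddCommGroup X] [NormedSpace ℝ X]
    (C : Set X) (hC : C.Nonempty) (hconv : Convex ℝ C)
    (hbdd : Bornology.IsBounded C) (hdC : 0 < Metric.diam C)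
    (T Φ : X → X) (hT : ∀ x ∈ C, T x ∈ C) (hΦ : ∀ x ∈ C, Φ x ∈ C)
    (hTne : ∀ x ∈ C, ∀ y ∈ C, ‖T x - T y‖ ≤ ‖x - y‖)
    (ρ : ℝ) (hρ : ρ ∈ Set.Ioo (0 : ℝ) 1)
    (hΦc : ∀ x ∈ C, ∀ y ∈ C, ‖Φ x - Φ y‖ ≤ ρ * ‖x - y‖)
    (α : ℕ → ℝ) (hα : ∀ n, α n ∈ Set.Ioo (0 : ℝ) 1)
    (φ : ℝ → ℕ) (hφ : ∀ e : ℝ, 0 < e → ∀ n ≥ φ e, |α n| < e)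
    (θ : ℕ → ℕ) (hθ : ∀ n : ℕ, (n : ℝ) ≤ ∑ i ∈ Finset.range (θ n + 1), α i)
    (β : ℝ → ℕ)
    (hβ : ∀ e : ℝ, 0 < e → ∀ n : ℕ,
      abs ((∑ i ∈ Finset.range (β e + n + 1), |α (i + 1) - α i|) -
          ∑ i ∈ Finset.range (β e + 1), |α (i + 1) - α i|) < e)
    (x : ℕ → X) (hx0 : x 0 ∈ C) (hxC : ∀ n, x n ∈ C)
    (hrec : ∀ n, x (n + 1) = T (α n • Φ (x n) + (1 - α n) • x n)) :
    Tendsto (fun n => ‖x n - T (x n)‖) atTop (nhds 0) ∧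
      ∀ e ∈ Set.Ioo (0 : ℝ) 2,
        ∀ n ≥ max
          (1 + θ (⌈1 / (1 - ρ)⌉₊ *
            (β (e / (4 * ((2 + ρ) * Metric.diam C))) + 2 +
              ⌈Real.log (4 * Metric.diam C / e)⌉₊)))
          (1 + φ (e / (2 * ((2 + ρ) * Metric.diam C)))),
        ‖x n - T (x n)‖ < e :=
  stmt_13_general C hconv hbdd hdC T Φ hΦ hTne ρ hρ hΦc α hα φ hφ θ hθ β hβ x hxC hrec
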